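/- Let I be an open interval and let h, g : I → ℝ be smooth with g nowhere zero. Suppose there exist a real constant c₀ and ε ∈ {0, 1} and an antiderivative G of g on I such that G + c₀ is nowhere zero and h = (ε/2) g/(G + c₀) − g'/g on I. Then there exist smooth functions α, β, γ, θ, φ, ψ : I → ℝ with α'(t) β(t) θ(t) ≠ 0 on I such that for every smooth solution u : I × ℝ → ℝ of u_t + u u_x + g(t) u_{xxx} + h(t) u = 0, the function ũ determined on the image region by ũ(α(t), β(t)x + γ(t)) = θ(t) u(t,x) + φ(t) x + ψ(t) is a smooth solution of the standard constant coefficient KdV equation ũ_{t̃} + ũ ũ_{x̃} + ũ_{x̃x̃x̃} = 0. -/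

import Mathlib

open Set Filter Function Topology

lemma one_le_inf : (1 : WithTop ℕ∞) ≤ ((⊤ : ℕ∞) : WithTop ℕ∞) := by
  exact_mod_cast ENat.natCast_le_of_coe_top_le_withTop le_rfl 1

lemma inf_ne_zero : ((⊤ : ℕ∞) : WithTop ℕ∞) ≠ 0 :=
  ENat.one_le_iff_ne_zero_withTop.mp one_le_inf

lemma three_le_inf : ((3:ℕ) : WithTop ℕ∞) ≤ ((⊤ : ℕ∞) : WithTop ℕ∞) :=
  ENat.natCast_le_of_coe_top_le_withTop le_rfl 3

lemma iter3_eq (f : ℝ → ℝ) : iteratedDeriv 3 f = deriv (deriv (deriv f)) := by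
  rw [show (3:ℕ) = 2+1 from rfl, iteratedDeriv_succ, show (2:ℕ) = 1+1 from rfl,
    iteratedDeriv_succ, iteratedDeriv_one]

lemma deriv_affine {f : ℝ → ℝ} (hf : ContDiff ℝ (⊤:ℕ∞) f) (c d : ℝ) :
    deriv (fun x => c * f x + d * x) = fun x => c * deriv f x + d := by
  funext x
  have h1 : HasDerivAt (fun x => c * f x + d * x) (c * deriv f x + d * 1) x :=
    (((hf.differentiable inf_ne_zero) x).hasDerivAt.const_mul c).add
      ((hasDerivAt_id x).const_mul d)
  simpa using h1.deriv

lemma deriv_cmul_const {g : ℝ → ℝ} (hg : ContDiff ℝ (⊤:ℕ∞) g) (c d : ℝ) :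
    deriv (fun x => c * g x + d) = fun x => c * deriv g x := by
  funext x
  exact ((((hg.differentiable inf_ne_zero) x).hasDerivAt.const_mul c).add_const d).deriv

lemma slice_derivs {w f : ℝ → ℝ} {β c d : ℝ} (hw : ContDiff ℝ (⊤:ℕ∞) w)
    (hf : ContDiff ℝ (⊤:ℕ∞) f)
    (hrel : ∀ x, w (β * x) = c * f x + d * x) (x : ℝ) :
    β * deriv w (β * x) = c * deriv f x + d ∧
      β ^ 3 * iteratedDeriv 3 w (β * x) = c * iteratedDeriv 3 f x := by
  have hfun : (fun x => w (β * x)) = fun x => c * f x + d * x := funext hrel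
  constructor
  · have h1 := iteratedDeriv_comp_const_mul (n := 1) (hw.of_le one_le_inf) β
    rw [hfun] at h1
    have := congrFun h1 x
    rw [iteratedDeriv_one, iteratedDeriv_one, deriv_affine hf c d] at this
    simpa using this.symm
  · have h3 := iteratedDeriv_comp_const_mul (n := 3) (hw.of_le three_le_inf) β
    rw [hfun] at h3
    have := congrFun h3 x
    have hf1 := (contDiff_infty_iff_deriv.1 hf).2
    have hf2 := (contDiff_infty_iff_deriv.1 hf1).2
    rw [iter3_eq, iter3_eq, deriv_affine hf c d, deriv_cmul_const hf1 c d] at this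
    have e3 : deriv (fun x => c * deriv (deriv f) x) = fun x => c * deriv (deriv (deriv f)) x := by
      have := deriv_cmul_const hf2 c 0
      simpa using this
    rw [e3] at this
    rw [iter3_eq, iter3_eq]
    simpa [pow_succ, mul_assoc, mul_comm, mul_left_comm] using this.symm

lemma partial_hasDerivAt {u : ℝ → ℝ → ℝ} {I : Set ℝ} (hI : IsOpen I)
    (hu : ContDiffOn ℝ (⊤:ℕ∞) (fun p : ℝ × ℝ => u p.1 p.2) (I ×ˢ (univ : Set ℝ)))
    {t : ℝ} (ht : t ∈ I) {m : ℝ → ℝ} {m' : ℝ} (hm : HasDerivAt m m' t) :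
    HasDerivAt (fun τ => u τ (m τ))
      (deriv (fun τ => u τ (m t)) t + deriv (fun y => u t y) (m t) * m') t := by
  set x := m t with hx
  have hopen : IsOpen (I ×ˢ (univ : Set ℝ)) := hI.prod isOpen_univ
  have hat : ContDiffAt ℝ (⊤:ℕ∞) (fun p : ℝ × ℝ => u p.1 p.2) (t, x) :=
    hu.contDiffAt (hopen.mem_nhds ⟨ht, mem_univ _⟩)
  have hd : DifferentiableAt ℝ (fun p : ℝ × ℝ => u p.1 p.2) (t, x) :=
    hat.differentiableAt inf_ne_zero
  set D := fderiv ℝ (fun p : ℝ × ℝ => u p.1 p.2) (t, x) with hD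
  have hFD : HasFDerivAt (fun p : ℝ × ℝ => u p.1 p.2) D (t, x) := hd.hasFDerivAt
  have hc1 : HasDerivAt (fun τ => (τ, x)) ((1 : ℝ), (0:ℝ)) t :=
    (hasDerivAt_id t).prodMk (hasDerivAt_const t x)
  have hp1 : HasDerivAt (fun τ => u τ x) (D (1, 0)) t := by
    have := hFD.comp_hasDerivAt t hc1; exact this
  have hc2 : HasDerivAt (fun y => (t, y)) ((0:ℝ), (1:ℝ)) x :=
    (hasDerivAt_const x t).prodMk (hasDerivAt_id x)
  have hp2 : HasDerivAt (fun y => u t y) (D (0, 1)) x := hFD.comp_hasDerivAt x hc2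
  have hc : HasDerivAt (fun τ => (τ, m τ)) ((1 : ℝ), m') t := (hasDerivAt_id t).prodMk hm
  have hcomp : HasDerivAt (fun τ => u τ (m τ)) (D (1, m')) t := by
    have := hFD.comp_hasDerivAt t hc; exact this
  have hsplit : D (1, m') = D (1, 0) + D (0, 1) * m' := by
    have : ((1:ℝ), m') = ((1:ℝ), (0:ℝ)) + m' • ((0:ℝ), (1:ℝ)) := by
      simp [Prod.ext_iff]
    rw [this, map_add, map_smul]
    simp [mul_comm]
  rw [hp1.deriv, hp2.deriv]
  rwa [hsplit] at hcomp

lemma inj_of_deriv_ne {I : Set ℝ} (hIconv : Convex ℝ I) {α a : ℝ → ℝ}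
    (hαd : ∀ t ∈ I, HasDerivAt α (a t) t) (ha0 : ∀ t ∈ I, a t ≠ 0) :
    InjOn α I := by
  have key : ∀ x ∈ I, ∀ y ∈ I, x < y → α x ≠ α y := by
    intro x hx y hy hxy heq
    have hsub : Icc x y ⊆ I := hIconv.ordConnected.out hx hy
    obtain ⟨c, hc, hc0⟩ := exists_deriv_eq_zero hxy
      (fun z hz => ((hαd z (hsub hz)).differentiableAt.continuousAt).continuousWithinAt) heq
    exact ha0 c (hsub (Ioo_subset_Icc_self hc)) ((hαd c (hsub (Ioo_subset_Icc_self hc))).deriv ▸ hc0)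
  intro x hx y hy hxy
  rcases lt_trichotomy x y with h | h | h
  · exact absurd hxy (key x hx y hy h)
  · exact h
  · exact absurd hxy.symm (key y hy x hx h)

lemma inv_package {I : Set ℝ} (hI : IsOpen I) (hIconv : Convex ℝ I) {α a : ℝ → ℝ}
    (hα : ContDiffOn ℝ (⊤:ℕ∞) α I)
    (hαd : ∀ t ∈ I, HasDerivAt α (a t) t) (ha0 : ∀ t ∈ I, a t ≠ 0) :
    IsOpen (α '' I) ∧ ∀ t ∈ I, invFunOn α I (α t) = t ∧
      ContDiffAt ℝ (⊤:ℕ∞) (invFunOn α I) (α t) ∧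
      HasDerivAt (invFunOn α I) (a t)⁻¹ (α t) := by
  have hinj : InjOn α I := inj_of_deriv_ne hIconv hαd ha0
  have hmem : ∀ t ∈ I, α '' I ∈ 𝓝 (α t) := by
    intro t ht
    have hct : ContDiffAt ℝ (⊤:ℕ∞) α t := hα.contDiffAt (hI.mem_nhds ht)
    have he := (hαd t ht).hasFDerivAt_equiv (ha0 t ht)
    have hs := hct.hasStrictFDerivAt' he inf_ne_zero
    have hevr := hs.eventually_right_inverse
    have htend : Tendsto (hs.localInverse α _ t) (𝓝 (α t)) (𝓝 t) := hs.localInverse_tendsto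
    filter_upwards [hevr, htend.eventually (hI.mem_nhds ht)] with z h1 h2
    exact ⟨_, h2, h1⟩
  refine ⟨isOpen_iff_mem_nhds.2 (fun z hz => ?_), fun t ht => ?_⟩
  · obtain ⟨t, ht, rfl⟩ := hz; exact hmem t ht
  have hct : ContDiffAt ℝ (⊤:ℕ∞) α t := hα.contDiffAt (hI.mem_nhds ht)
  have he := (hαd t ht).hasFDerivAt_equiv (ha0 t ht)
  have hs := hct.hasStrictFDerivAt' he inf_ne_zero
  have hevr := hs.eventually_right_inverse
  have htend : Tendsto (hs.localInverse α _ t) (𝓝 (α t)) (𝓝 t) := hs.localInverse_tendsto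
  have hfix : invFunOn α I (α t) = t := hinj.leftInvOn_invFunOn ht
  have hCD : ContDiffAt ℝ (⊤:ℕ∞) (hs.localInverse α _ t) (α t) :=
    hct.to_localInverse he inf_ne_zero
  have heq : invFunOn α I =ᶠ[𝓝 (α t)] hs.localInverse α _ t := by
    filter_upwards [hevr, htend.eventually (hI.mem_nhds ht)] with z h1 h2
    have hz : z ∈ α '' I := ⟨_, h2, h1⟩
    have h3 : invFunOn α I z ∈ I := invFunOn_mem (by rcases hz with ⟨w, hw, rfl⟩; exact ⟨w, hw, rfl⟩)
    have h4 : α (invFunOn α I z) = z := invFunOn_eq (by rcases hz with ⟨w, hw, rfl⟩; exact ⟨w, hw, rfl⟩)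
    exact hinj h3 h2 (h4.trans h1.symm)
  have hCD' : ContDiffAt ℝ (⊤:ℕ∞) (invFunOn α I) (α t) := hCD.congr_of_eventuallyEq heq
  refine ⟨hfix, hCD', ?_⟩
  have hdiff : DifferentiableAt ℝ (invFunOn α I) (α t) := hCD'.differentiableAt inf_ne_zero
  have hos : HasDerivAt (invFunOn α I) (deriv (invFunOn α I) (α t)) (α t) := hdiff.hasDerivAt
  have hα' : HasDerivAt α (a t) (invFunOn α I (α t)) := by rw [hfix]; exact hαd t ht
  have hcomp : HasDerivAt (fun z => α (invFunOn α I z))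
      (a t * deriv (invFunOn α I) (α t)) (α t) := hα'.comp _ hos
  have hid : (fun z => α (invFunOn α I z)) =ᶠ[𝓝 (α t)] id := by
    filter_upwards [hmem t ht] with z hz
    exact invFunOn_eq (by rcases hz with ⟨w, hw, rfl⟩; exact ⟨w, hw, rfl⟩)
  have hone : a t * deriv (invFunOn α I) (α t) = 1 :=
    (hcomp.congr_of_eventuallyEq hid.symm).unique (hasDerivAt_id _)
  have : deriv (invFunOn α I) (α t) = (a t)⁻¹ :=
    eq_inv_of_mul_eq_one_left (by rw [mul_comm]; exact hone)
  rwa [this] at hos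

theorem kdv_aux
    (I : Set ℝ) (hI : IsOpen I) (hIconv : Convex ℝ I)
    (h g : ℝ → ℝ)
    (α β θ a b th' : ℝ → ℝ) (φ : ℝ)
    (hα : ContDiffOn ℝ (⊤:ℕ∞) α I) (hβ : ContDiffOn ℝ (⊤:ℕ∞) β I)
    (hθ : ContDiffOn ℝ (⊤:ℕ∞) θ I)
    (hαd : ∀ t ∈ I, HasDerivAt α (a t) t)
    (hβd : ∀ t ∈ I, HasDerivAt β (b t) t)
    (hθd : ∀ t ∈ I, HasDerivAt θ (th' t) t)
    (ha0 : ∀ t ∈ I, a t ≠ 0) (hβ0 : ∀ t ∈ I, β t ≠ 0)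
    (hi : ∀ t ∈ I, a t = g t * β t ^ 3)
    (hii : ∀ t ∈ I, θ t * a t = β t)
    (hiii : ∀ t ∈ I, φ * a t = b t)
    (hiv : ∀ t ∈ I, th' t = θ t * h t - a t * θ t * φ / β t)
    (u : ℝ → ℝ → ℝ)
    (hu : ContDiffOn ℝ (⊤:ℕ∞) (fun p : ℝ × ℝ => u p.1 p.2) (I ×ˢ (univ : Set ℝ)))
    (hpde : ∀ t ∈ I, ∀ x : ℝ, deriv (fun τ => u τ x) t + u t x * deriv (fun y => u t y) x
        + g t * iteratedDeriv 3 (fun y => u t y) x + h t * u t x = 0)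
    (ut : ℝ → ℝ → ℝ)
    (hrel : ∀ t ∈ I, ∀ x : ℝ, ut (α t) (β t * x) = θ t * u t x + φ * x) :
    ContDiffOn ℝ (⊤:ℕ∞) (fun p : ℝ × ℝ => ut p.1 p.2) ((α '' I) ×ˢ (univ : Set ℝ)) ∧
    ∀ t ∈ I, ∀ x : ℝ,
      deriv (fun τ => ut τ (β t * x)) (α t)
        + ut (α t) (β t * x) * deriv (fun y => ut (α t) y) (β t * x)
        + iteratedDeriv 3 (fun y => ut (α t) y) (β t * x) = 0 := by
  obtain ⟨hopenimg, hpack⟩ := inv_package hI hIconv hα hαd ha0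
  set αi := invFunOn α I with hαi
  have hopenP : IsOpen ((α '' I) ×ˢ (univ : Set ℝ)) := hopenimg.prod isOpen_univ
  -- key pointwise formula for ut on the image region
  have hkey : ∀ z ∈ α '' I, ∀ y : ℝ,
      ut z y = θ (αi z) * u (αi z) (y * (β (αi z))⁻¹) + φ * (y * (β (αi z))⁻¹) := by
    rintro z ⟨r, hr, rfl⟩ y
    have hfix : αi (α r) = r := (hpack r hr).1
    rw [hfix]
    have hb := hβ0 r hr
    have := hrel r hr (y * (β r)⁻¹)
    rwa [show β r * (y * (β r)⁻¹) = y by field_simp] at this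
  -- smoothness of ut at each point of the region
  have hCDut : ∀ p ∈ (α '' I) ×ˢ (univ : Set ℝ),
      ContDiffAt ℝ (⊤:ℕ∞) (fun p : ℝ × ℝ => ut p.1 p.2) p := by
    rintro ⟨z, y⟩ ⟨hz, -⟩
    obtain ⟨r, hr, rfl⟩ := hz
    have hfix : αi (α r) = r := (hpack r hr).1
    have hCDi : ContDiffAt ℝ (⊤:ℕ∞) αi (α r) := (hpack r hr).2.1
    have h1 : ContDiffAt ℝ (⊤:ℕ∞) (fun q : ℝ × ℝ => αi q.1) (α r, y) :=
      ContDiffAt.comp (α r, y) hCDi contDiffAt_fst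
    have hθi : ContDiffAt ℝ (⊤:ℕ∞) (fun q : ℝ × ℝ => θ (αi q.1)) (α r, y) := by
      refine ContDiffAt.comp _ ?_ h1
      rw [hfix]; exact hθ.contDiffAt (hI.mem_nhds hr)
    have hβi : ContDiffAt ℝ (⊤:ℕ∞) (fun q : ℝ × ℝ => β (αi q.1)) (α r, y) := by
      refine ContDiffAt.comp _ ?_ h1
      rw [hfix]; exact hβ.contDiffAt (hI.mem_nhds hr)
    have hβinv : ContDiffAt ℝ (⊤:ℕ∞) (fun q : ℝ × ℝ => (β (αi q.1))⁻¹) (α r, y) :=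
      hβi.inv (by rw [hfix]; exact hβ0 r hr)
    have hxmap : ContDiffAt ℝ (⊤:ℕ∞) (fun q : ℝ × ℝ => q.2 * (β (αi q.1))⁻¹) (α r, y) :=
      contDiffAt_snd.mul hβinv
    have hucomp : ContDiffAt ℝ (⊤:ℕ∞)
        (fun q : ℝ × ℝ => u (αi q.1) (q.2 * (β (αi q.1))⁻¹)) (α r, y) := by
      have hinner : ContDiffAt ℝ (⊤:ℕ∞)
          (fun q : ℝ × ℝ => (αi q.1, q.2 * (β (αi q.1))⁻¹)) (α r, y) := h1.prodMk hxmap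
      have houter : ContDiffAt ℝ (⊤:ℕ∞) (fun p : ℝ × ℝ => u p.1 p.2)
          (αi (α r, y).1, (α r, y).2 * (β (αi (α r, y).1))⁻¹) := by
        show ContDiffAt ℝ (⊤:ℕ∞) (fun p : ℝ × ℝ => u p.1 p.2) (αi (α r), y * (β (αi (α r)))⁻¹)
        rw [hfix]
        exact hu.contDiffAt ((hI.prod isOpen_univ).mem_nhds ⟨hr, mem_univ _⟩)
      exact ContDiffAt.comp (α r, y) houter hinner
    have hF : ContDiffAt ℝ (⊤:ℕ∞)
        (fun q : ℝ × ℝ => θ (αi q.1) * u (αi q.1) (q.2 * (β (αi q.1))⁻¹)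
          + φ * (q.2 * (β (αi q.1))⁻¹)) (α r, y) :=
      (hθi.mul hucomp).add (contDiffAt_const.mul hxmap)
    refine hF.congr_of_eventuallyEq ?_
    filter_upwards [hopenP.mem_nhds ⟨⟨r, hr, rfl⟩, mem_univ _⟩] with q hq
    exact hkey q.1 hq.1 q.2
  refine ⟨fun p hp => (hCDut p hp).contDiffWithinAt, ?_⟩
  -- the PDE
  intro t ht x
  have hb := hβ0 t ht
  have ha := ha0 t ht
  have hfix : αi (α t) = t := (hpack t ht).1
  have hDi : HasDerivAt αi (a t)⁻¹ (α t) := (hpack t ht).2.2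
  have hwCD : ContDiff ℝ (⊤:ℕ∞) (fun y => ut (α t) y) := by
    rw [← contDiffOn_univ]
    intro y _
    have hc : ContDiffAt ℝ (⊤:ℕ∞) (fun y : ℝ => ((α t, y) : ℝ × ℝ)) y :=
      contDiffAt_const.prodMk contDiffAt_id
    exact (ContDiffAt.comp y (hCDut (α t, y) ⟨mem_image_of_mem α ht, mem_univ _⟩)
      hc).contDiffWithinAt
  have hfCD : ContDiff ℝ (⊤:ℕ∞) (fun x => u t x) := by
    rw [← contDiffOn_univ]
    intro y _
    have hc : ContDiffAt ℝ (⊤:ℕ∞) (fun y : ℝ => ((t, y) : ℝ × ℝ)) y :=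
      contDiffAt_const.prodMk contDiffAt_id
    exact (ContDiffAt.comp y
      (hu.contDiffAt ((hI.prod isOpen_univ).mem_nhds ⟨ht, mem_univ _⟩)) hc).contDiffWithinAt
  obtain ⟨E1, E3⟩ := slice_derivs hwCD hfCD (hrel t ht) x
  -- time derivative of ut
  have hminv : HasDerivAt (fun τ => (β τ)⁻¹) (-(b t) / β t ^ 2) t := (hβd t ht).inv hb
  have hm : HasDerivAt (fun τ => (β t * x) * (β τ)⁻¹) ((β t * x) * (-(b t) / β t ^ 2)) t :=
    hminv.const_mul (β t * x)
  have hmx : β t * x * (β t)⁻¹ = x := by field_simp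
  have hud := partial_hasDerivAt hI hu ht hm
  rw [hmx] at hud
  have hq' := ((hθd t ht).mul hud).add (hm.const_mul φ)
  rw [hmx] at hq'
  have hqi : HasDerivAt
      (fun τ => θ τ * u τ (β t * x * (β τ)⁻¹) + φ * (β t * x * (β τ)⁻¹))
      (th' t * u t x +
        θ t * (deriv (fun τ => u τ x) t +
          deriv (fun y => u t y) x * (β t * x * (-(b t) / β t ^ 2))) +
        φ * (β t * x * (-(b t) / β t ^ 2))) (αi (α t)) := by
    rw [hfix]; exact hq'
  have hcomp := hqi.comp (α t) hDi
  have hev : (fun z => ut z (β t * x)) =ᶠ[𝓝 (α t)]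
      ((fun τ => θ τ * u τ (β t * x * (β τ)⁻¹) + φ * (β t * x * (β τ)⁻¹)) ∘ αi) := by
    filter_upwards [hopenimg.mem_nhds (mem_image_of_mem α ht)] with z hz
    simpa using hkey z hz (β t * x)
  have hT1 := (hcomp.congr_of_eventuallyEq hev).deriv
  have hT2 : deriv (fun y => ut (α t) y) (β t * x) =
      (θ t * deriv (fun y => u t y) x + φ) / β t := by
    rw [eq_div_iff hb, mul_comm]; exact E1
  have hT3 : iteratedDeriv 3 (fun y => ut (α t) y) (β t * x) =
      θ t * iteratedDeriv 3 (fun y => u t y) x / β t ^ 3 := by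
    rw [eq_div_iff (pow_ne_zero 3 hb), mul_comm]; exact E3
  rw [hT1, hT2, hT3, hrel t ht x]
  have hUT : deriv (fun τ => u τ x) t =
      -(u t x * deriv (fun y => u t y) x + g t * iteratedDeriv 3 (fun y => u t y) x
        + h t * u t x) := by linarith [hpde t ht x]
  have hg' : g t = a t / β t ^ 3 := by
    rw [hi t ht]; field_simp
  have hθ' : θ t = β t / a t := by
    rw [← hii t ht]; field_simp
  rw [hUT, hiv t ht, ← hiii t ht, hg', hθ']
  field_simp
  ring

theorem kdv_wrap
    (I : Set ℝ) (hI : IsOpen I) (hIconv : Convex ℝ I)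
    (h g : ℝ → ℝ)
    (α β θ a b th' : ℝ → ℝ) (φc : ℝ)
    (hα : ContDiffOn ℝ (⊤:ℕ∞) α I) (hβ : ContDiffOn ℝ (⊤:ℕ∞) β I)
    (hθ : ContDiffOn ℝ (⊤:ℕ∞) θ I)
    (hαd : ∀ t ∈ I, HasDerivAt α (a t) t)
    (hβd : ∀ t ∈ I, HasDerivAt β (b t) t)
    (hθd : ∀ t ∈ I, HasDerivAt θ (th' t) t)
    (ha0 : ∀ t ∈ I, a t ≠ 0) (hβ0 : ∀ t ∈ I, β t ≠ 0) (hθ0 : ∀ t ∈ I, θ t ≠ 0)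
    (hi : ∀ t ∈ I, a t = g t * β t ^ 3)
    (hii : ∀ t ∈ I, θ t * a t = β t)
    (hiii : ∀ t ∈ I, φc * a t = b t)
    (hiv : ∀ t ∈ I, th' t = θ t * h t - a t * θ t * φc / β t) :
    ∃ α' β' γ θ' φ' ψ' : ℝ → ℝ,
      ContDiffOn ℝ (⊤ : ℕ∞) α' I ∧ ContDiffOn ℝ (⊤ : ℕ∞) β' I ∧
      ContDiffOn ℝ (⊤ : ℕ∞) γ I ∧ ContDiffOn ℝ (⊤ : ℕ∞) θ' I ∧
      ContDiffOn ℝ (⊤ : ℕ∞) φ' I ∧ ContDiffOn ℝ (⊤ : ℕ∞) ψ' I ∧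
      (∀ t ∈ I, deriv α' t * β' t * θ' t ≠ 0) ∧
      ∀ u : ℝ → ℝ → ℝ,
        ContDiffOn ℝ (⊤ : ℕ∞) (fun p : ℝ × ℝ => u p.1 p.2) (I ×ˢ Set.univ) →
        (∀ t ∈ I, ∀ x : ℝ,
          deriv (fun τ => u τ x) t + u t x * deriv (fun y => u t y) x
            + g t * iteratedDeriv 3 (fun y => u t y) x + h t * u t x = 0) →
        ∀ ut : ℝ → ℝ → ℝ,
          (∀ t ∈ I, ∀ x : ℝ,
            ut (α' t) (β' t * x + γ t) = θ' t * u t x + φ' t * x + ψ' t) →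
          ContDiffOn ℝ (⊤ : ℕ∞) (fun p : ℝ × ℝ => ut p.1 p.2)
            ((α' '' I) ×ˢ Set.univ) ∧
          ∀ t ∈ I, ∀ x : ℝ,
            deriv (fun τ => ut τ (β' t * x + γ t)) (α' t)
              + ut (α' t) (β' t * x + γ t)
                * deriv (fun y => ut (α' t) y) (β' t * x + γ t)
              + iteratedDeriv 3 (fun y => ut (α' t) y) (β' t * x + γ t) = 0 := by
  refine ⟨α, β, fun _ => 0, θ, fun _ => φc, fun _ => 0, hα, hβ, contDiffOn_const, hθ,
    contDiffOn_const, contDiffOn_const, ?_, ?_⟩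
  · intro t ht
    rw [(hαd t ht).deriv]
    exact mul_ne_zero (mul_ne_zero (ha0 t ht) (hβ0 t ht)) (hθ0 t ht)
  · intro u hu hpde ut hrel
    have hrel' : ∀ t ∈ I, ∀ x : ℝ, ut (α t) (β t * x) = θ t * u t x + φc * x := by
      intro t ht x
      simpa using hrel t ht x
    obtain ⟨hsm, hp⟩ := kdv_aux I hI hIconv h g α β θ a b th' φc hα hβ hθ hαd hβd hθd
      ha0 hβ0 hi hii hiii hiv u hu hpde ut hrel'
    refine ⟨hsm, fun t ht x => ?_⟩
    simpa using hp t ht x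



/-- sufficiency direction of Corollary 1: if
h = (ε/2) g/(G + c₀) − g'/g for some constant c₀, ε ∈ {0,1} and antiderivative G of g
with G + c₀ nowhere zero, then there is a point transformation
t̃ = α(t), x̃ = β(t)x + γ(t), ũ = θ(t)u + φ(t)x + ψ(t) with α'βθ ≠ 0 mapping every
smooth solution of u_t + u u_x + g(t) u_{xxx} + h(t) u = 0 to a smooth solution of
the standard KdV equation ũ_t̃ + ũ ũ_x̃ + ũ_x̃x̃x̃ = 0. -/
theorem stmt_17
    (I : Set ℝ) (hI : IsOpen I) (hIconv : Convex ℝ I)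
    (h g : ℝ → ℝ)
    (hh : ContDiffOn ℝ (⊤ : ℕ∞) h I) (hg : ContDiffOn ℝ (⊤ : ℕ∞) g I)
    (hg0 : ∀ t ∈ I, g t ≠ 0)
    (c₀ ε : ℝ) (hε : ε = 0 ∨ ε = 1)
    (G : ℝ → ℝ) (hG : ∀ t ∈ I, HasDerivAt G (g t) t)
    (hG0 : ∀ t ∈ I, G t + c₀ ≠ 0)
    (hred : ∀ t ∈ I, h t = (ε / 2) * g t / (G t + c₀) - deriv g t / g t) :
    ∃ α β γ θ φ ψ : ℝ → ℝ,
      ContDiffOn ℝ (⊤ : ℕ∞) α I ∧ ContDiffOn ℝ (⊤ : ℕ∞) β I ∧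
      ContDiffOn ℝ (⊤ : ℕ∞) γ I ∧ ContDiffOn ℝ (⊤ : ℕ∞) θ I ∧
      ContDiffOn ℝ (⊤ : ℕ∞) φ I ∧ ContDiffOn ℝ (⊤ : ℕ∞) ψ I ∧
      (∀ t ∈ I, deriv α t * β t * θ t ≠ 0) ∧
      ∀ u : ℝ → ℝ → ℝ,
        ContDiffOn ℝ (⊤ : ℕ∞) (fun p : ℝ × ℝ => u p.1 p.2) (I ×ˢ Set.univ) →
        (∀ t ∈ I, ∀ x : ℝ,
          deriv (fun τ => u τ x) t + u t x * deriv (fun y => u t y) x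
            + g t * iteratedDeriv 3 (fun y => u t y) x + h t * u t x = 0) →
        ∀ ut : ℝ → ℝ → ℝ,
          (∀ t ∈ I, ∀ x : ℝ,
            ut (α t) (β t * x + γ t) = θ t * u t x + φ t * x + ψ t) →
          ContDiffOn ℝ (⊤ : ℕ∞) (fun p : ℝ × ℝ => ut p.1 p.2)
            ((α '' I) ×ˢ Set.univ) ∧
          ∀ t ∈ I, ∀ x : ℝ,
            deriv (fun τ => ut τ (β t * x + γ t)) (α t)
              + ut (α t) (β t * x + γ t)
                * deriv (fun y => ut (α t) y) (β t * x + γ t)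
              + iteratedDeriv 3 (fun y => ut (α t) y) (β t * x + γ t) = 0 := by
  classical
  rcases Set.eq_empty_or_nonempty I with hIe | ⟨t₀, ht₀⟩
  · subst hIe
    refine ⟨fun _ => 0, fun _ => 0, fun _ => 0, fun _ => 0, fun _ => 0, fun _ => 0,
      contDiffOn_const, contDiffOn_const, contDiffOn_const, contDiffOn_const,
      contDiffOn_const, contDiffOn_const, fun t ht => absurd ht (notMem_empty t), ?_⟩
    intro u hu hpde ut hrel
    constructor
    · intro p hp
      rw [image_empty] at hp
      exact absurd hp.1 (notMem_empty _)
    · intro t ht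
      exact absurd ht (notMem_empty t)
  -- I nonempty
  have hgd : ∀ t ∈ I, DifferentiableAt ℝ g t := fun t ht =>
    (hg.contDiffAt (hI.mem_nhds ht)).differentiableAt inf_ne_zero
  have hGCD : ContDiffOn ℝ (⊤:ℕ∞) G I := by
    rw [contDiffOn_infty_iff_deriv_of_isOpen hI]
    exact ⟨fun t ht => (hG t ht).differentiableAt.differentiableWithinAt,
      hg.congr (fun t ht => (hG t ht).deriv)⟩
  rcases hε with rfl | rfl
  · -- ε = 0
    refine kdv_wrap I hI hIconv h g G (fun _ => 1) (fun t => (g t)⁻¹) g (fun _ => 0)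
      (fun t => -(deriv g t) / (g t) ^ 2) 0 hGCD contDiffOn_const (hg.inv hg0) hG
      (fun t ht => hasDerivAt_const t 1) (fun t ht => ((hgd t ht).hasDerivAt).inv (hg0 t ht))
      hg0 (fun t ht => one_ne_zero) (fun t ht => inv_ne_zero (hg0 t ht))
      (fun t ht => by ring) (fun t ht => inv_mul_cancel₀ (hg0 t ht)) (fun t ht => by simp)
      (fun t ht => ?_)
    rw [hred t ht]
    field_simp
    ring
  · -- ε = 1
    set σ : ℝ := if 0 < G t₀ + c₀ then 1 else -1 with hσdef
    have hσ2 : σ * σ = 1 := by rw [hσdef]; split_ifs <;> norm_num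
    have hσ0 : σ ≠ 0 := by rw [hσdef]; split_ifs <;> norm_num
    set s : ℝ → ℝ := fun t => σ * (G t + c₀) with hsdef
    have hs0 : ∀ t ∈ I, s t ≠ 0 := fun t ht => mul_ne_zero hσ0 (hG0 t ht)
    have hst₀ : 0 < s t₀ := by
      rw [hsdef, hσdef]
      split_ifs with hpos
      · simpa using hpos
      · have h1 : G t₀ + c₀ < 0 := lt_of_le_of_ne (not_lt.1 hpos) (hG0 t₀ ht₀)
        simp only [neg_mul, one_mul]
        linarith
    have hscont : ContinuousOn s I :=
      continuousOn_const.mul ((hGCD.continuousOn).add continuousOn_const)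
    have hspos : ∀ t ∈ I, 0 < s t := by
      intro t ht
      by_contra hle
      push_neg at hle
      have hlt : s t < 0 := lt_of_le_of_ne hle (hs0 t ht)
      have hsub : uIcc t₀ t ⊆ I := hIconv.ordConnected.uIcc_subset ht₀ ht
      have h0mem : (0:ℝ) ∈ uIcc (s t₀) (s t) := by
        rw [Set.mem_uIcc]
        right
        exact ⟨le_of_lt hlt, le_of_lt hst₀⟩
      obtain ⟨c, hc, hc0⟩ := intermediate_value_uIcc (hscont.mono hsub) h0mem
      exact hs0 c (hsub hc) hc0
    have hsd : ∀ t ∈ I, HasDerivAt s (σ * g t) t := fun t ht =>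
      ((hG t ht).add_const c₀).const_mul σ
    have hsCD : ContDiffOn ℝ (⊤:ℕ∞) s I :=
      contDiffOn_const.mul (hGCD.add contDiffOn_const)
    set q : ℝ → ℝ := fun t => Real.sqrt (s t) with hqdef
    have hqpos : ∀ t ∈ I, 0 < q t := fun t ht => Real.sqrt_pos.2 (hspos t ht)
    have hq0 : ∀ t ∈ I, q t ≠ 0 := fun t ht => ne_of_gt (hqpos t ht)
    have hq2 : ∀ t ∈ I, q t ^ 2 = s t := fun t ht => Real.sq_sqrt (le_of_lt (hspos t ht))
    have hqd : ∀ t ∈ I, HasDerivAt q (σ * g t / (2 * q t)) t := fun t ht =>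
      (hsd t ht).sqrt (hs0 t ht)
    have hqCD : ContDiffOn ℝ (⊤:ℕ∞) q I := fun t ht =>
      ((hsCD.contDiffAt (hI.mem_nhds ht)).sqrt (hs0 t ht)).contDiffWithinAt
    have hGc : ∀ t ∈ I, G t + c₀ = σ * s t := by
      intro t ht
      have : σ * s t = (σ * σ) * (G t + c₀) := by rw [hsdef]; ring
      rw [hσ2, one_mul] at this
      exact this.symm
    refine kdv_wrap I hI hIconv h g
      (fun t => -2 * σ * (q t)⁻¹)                                 -- α
      (fun t => (q t)⁻¹)                                          -- β
      (fun t => s t / g t)                                        -- θ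
      (fun t => g t * ((q t)⁻¹) ^ 3)                              -- a
      (fun t => -(σ * g t / (2 * q t)) / (q t) ^ 2)               -- b
      (fun t => (σ * g t * g t - s t * deriv g t) / (g t) ^ 2)    -- th'
      (-σ / 2)                                                    -- φc
      (contDiffOn_const.mul (hqCD.inv hq0))
      (hqCD.inv hq0)
      (hsCD.div hg hg0)
      (fun t ht => ?_) -- hαd
      (fun t ht => ((hqd t ht).inv (hq0 t ht)))
      (fun t ht => (hsd t ht).div ((hgd t ht).hasDerivAt) (hg0 t ht))
      (fun t ht => mul_ne_zero (hg0 t ht) (pow_ne_zero 3 (inv_ne_zero (hq0 t ht))))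
      (fun t ht => inv_ne_zero (hq0 t ht))
      (fun t ht => div_ne_zero (hs0 t ht) (hg0 t ht))
      (fun t ht => by ring)  -- (i)
      (fun t ht => ?_)       -- (ii)
      (fun t ht => ?_)       -- (iii)
      (fun t ht => ?_)       -- (iv)
    · -- hαd : HasDerivAt α (g t * (q t)⁻¹ ^ 3) t
      have h1 := ((hqd t ht).inv (hq0 t ht)).const_mul (-2 * σ)
      refine h1.congr_deriv ?_
      have hq := hq0 t ht
      field_simp
      linear_combination (g t) * hσ2
    · -- (ii) : θ a = β
      have hq := hq0 t ht
      have hgne := hg0 t ht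
      have hq2' : q t ^ 2 = σ * (G t + c₀) := hq2 t ht
      field_simp
      linear_combination (-1) * hq2'
    · -- (iii) : φc * a = b
      have hq := hq0 t ht
      field_simp
    · -- (iv)
      rw [hred t ht, hGc t ht]
      have hq := hq0 t ht
      have hgne := hg0 t ht
      have hsne := hs0 t ht
      have hq2' : q t ^ 2 = σ * (G t + c₀) := hq2 t ht
      field_simp
      linear_combination
        (2 * g t ^ 2 * q t ^ 2 - σ * g t ^ 2 * (G t + c₀)) * hσ2
        + (g t ^ 2) * hq2'
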